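/- arXiv:1908.08238 — 3 statements merged into one kernel-verified Lean document; each statement's English description precedes it below -/
import Mathlib

section
/- Let k ≥ 2 and let p be a real polynomial of degree at most k on an interval I_n = [t_{n-1}, t_n]. Let I^GL p denote the Lagrange interpolant of p of degree at most k-1 at the k Gauss–Lobatto points of I_n (the endpoints and the k-2 roots of the Jacobi polynomial of degree k-2 for the weight (1-t)(1+t), transformed to I_n). Then the derivatives agree at every Gauss point: (d/dt) p(t^G_{n,μ}) = (d/dt)(I^GL p)(t^G_{n,μ}) for all Gauss points t^G_{n,μ}, μ = 1,…,k-1, where the Gauss points are the roots of the Legendre polynomial of degree k-1 transformed to I_n. -/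
/-! Pull `e = p - q` back to `[-1, 1]` along the affine map `T`, giving `E` of degree `≤ k`.
`E` vanishes at the `k` distinct points `±1` and the roots of `J`, so `E = c (1 - t) (1 + t) J`.
Integrating by parts, `∫ E' r = -∫ E r' = -c ∫ (1 - t) (1 + t) J r' = 0` whenever
`deg r < k - 1`, so `E'` (of degree `≤ k - 1`) is orthogonal to the polynomials of degree
`< k - 1`, hence a multiple of the Legendre polynomial `L`, and vanishes at its roots.
By the chain rule `E'(g) = (b - a) / 2 * e'(T g)`. -/

open Polynomial

namespace Polynomial

section Field

variable {K : Type*} [Field K]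

theorem degree_sub_C_mul_lt {n : ℕ} {P Q : K[X]} (hP : P.natDegree ≤ n) (hQ : Q.natDegree = n)
    (hQ0 : Q ≠ 0) : (P - C (P.coeff n / Q.leadingCoeff) * Q).degree < n := by
  rw [degree_lt_iff_coeff_zero]
  intro m hm
  rcases hm.lt_or_eq with hm | rfl
  · simp [coeff_eq_zero_of_natDegree_lt (hP.trans_lt hm),
      coeff_eq_zero_of_natDegree_lt (hQ.trans_lt hm)]
  · rw [coeff_sub, coeff_C_mul, ← hQ, coeff_natDegree,
      div_mul_cancel₀ _ (leadingCoeff_ne_zero.mpr hQ0), sub_self]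

theorem eq_C_mul_of_eval_eq_zero {ι : Type*} [Fintype ι] {f : ι → K}
    (hf : Function.Injective f) {P Q : K[X]} (hP : P.natDegree ≤ Fintype.card ι) (hQ : Q.natDegree = Fintype.card ι)
    (hQ0 : Q ≠ 0) (hPf : ∀ i, P.eval (f i) = 0) (hQf : ∀ i, Q.eval (f i) = 0) :
    P = C (P.coeff (Fintype.card ι) / Q.leadingCoeff) * Q := by
  rw [← sub_eq_zero]
  refine eq_zero_of_degree_lt_of_eval_index_eq_zero Finset.univ hf.injOn ?_ fun i _ => ?_
  · simpa using degree_sub_C_mul_lt hP hQ hQ0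
  · simp [hPf i, hQf i]

end Field

section Real

open intervalIntegral

theorem eq_zero_of_integral_eval_mul_self_eq_zero {a b : ℝ} (hab : a < b) {P : ℝ[X]}
    (h : ∫ x in a..b, P.eval x * P.eval x = 0) : P = 0 := by
  by_contra hP
  obtain ⟨x, hx, hPx⟩ : ∃ x ∈ Set.Icc a b, P.eval x ≠ 0 := by
    by_contra! h0
    exact hP (P.eq_zero_of_infinite_isRoot ((Set.Icc_infinite hab).mono h0))
  exact (integral_pos hab (P.continuous.mul P.continuous).continuousOn
    (fun x _ => mul_self_nonneg _) ⟨x, hx, mul_self_pos.mpr hPx⟩).ne' h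

theorem eq_C_mul_of_forall_integral_eval_mul_eq_zero {a b : ℝ} (hab : a < b) {n : ℕ}
    {P L : ℝ[X]} (hP : P.natDegree ≤ n) (hL : L.natDegree = n) (hL0 : L ≠ 0)
    (hPorth : ∀ r : ℝ[X], r.natDegree < n → ∫ x in a..b, P.eval x * r.eval x = 0)
    (hLorth : ∀ r : ℝ[X], r.natDegree < n → ∫ x in a..b, L.eval x * r.eval x = 0) :
    P = C (P.coeff n / L.leadingCoeff) * L := by
  set D := P - C (P.coeff n / L.leadingCoeff) * L
  have hDorth (r : ℝ[X]) (hr : r.natDegree < n) : ∫ x in a..b, D.eval x * r.eval x = 0 := by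
    simp only [D, eval_sub, eval_mul, eval_C, sub_mul, mul_assoc]
    rw [integral_sub (f := fun x => P.eval x * r.eval x)
      (g := fun x => P.coeff n / L.leadingCoeff * (L.eval x * r.eval x))
      ((P.continuous.mul r.continuous).intervalIntegrable _ _)
      ((continuous_const.mul (L.continuous.mul r.continuous)).intervalIntegrable _ _),
      integral_const_mul, hPorth r hr, hLorth r hr, mul_zero, sub_zero]
  rw [← sub_eq_zero]
  by_contra hD0
  have hD : D.natDegree < n :=
    (natDegree_lt_iff_degree_lt hD0).mpr (degree_sub_C_mul_lt hP hL hL0)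
  exact hD0 (eq_zero_of_integral_eval_mul_self_eq_zero hab (hDorth D hD))

theorem integral_derivative_mul_eq_neg_integral_mul_derivative {a b : ℝ} {P : ℝ[X]}
    (ha : P.eval a = 0) (hb : P.eval b = 0) (r : ℝ[X]) :
    ∫ x in a..b, (derivative P).eval x * r.eval x =
      -∫ x in a..b, P.eval x * (derivative r).eval x := by
  have := integral_mul_deriv_eq_deriv_mul (a := a) (b := b) (fun x _ => r.hasDerivAt x)
    (fun x _ => P.hasDerivAt x) (r.derivative.continuous.intervalIntegrable _ _)
    (P.derivative.continuous.intervalIntegrable _ _)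
  simp only [ha, hb, mul_zero, sub_zero, zero_sub] at this
  simp only [mul_comm _ (eval _ r), mul_comm _ (eval _ (derivative r)), this]

section GaussLobatto

variable {m : ℕ} {J E : ℝ[X]} {s : Fin (m - 2) → ℝ}

theorem exists_eq_C_mul_one_sub_X_mul_one_add_X_mul (hm : 2 ≤ m) (hJdeg : J.natDegree = m - 2)
    (hJ0 : J ≠ 0) (hs : Function.Injective s) (hsmem : ∀ i, s i ∈ Set.Ioo (-1 : ℝ) 1)
    (hroot : ∀ i, J.eval (s i) = 0) (hE : E.natDegree ≤ m) (hEm1 : E.eval (-1) = 0)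
    (hE1 : E.eval 1 = 0) (hEs : ∀ i, E.eval (s i) = 0) :
    ∃ c, E = C c * ((1 - X) * (1 + X) * J) := by
  have hf : Function.Injective (Sum.elim s ![-1, 1]) := by
    refine hs.sumElim (fun i j h => ?_) fun i j => ?_
    · fin_cases i <;> fin_cases j <;> norm_num at h <;> rfl
    · have := hsmem i
      fin_cases j <;> simp <;> linarith [this.1, this.2]
  have hcard : Fintype.card (Fin (m - 2) ⊕ Fin 2) = m := by simp; omega
  have hw : ((1 - X) * (1 + X) : ℝ[X]).natDegree = 2 := by compute_degree!
  have hw0 : ((1 - X) * (1 + X) : ℝ[X]) ≠ 0 := ne_zero_of_natDegree_gt (hw ▸ two_pos)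
  have hW : ((1 - X) * (1 + X) * J).natDegree = m := by
    rw [natDegree_mul hw0 hJ0, hw, hJdeg]
    omega
  refine ⟨_, eq_C_mul_of_eval_eq_zero hf (hE.trans hcard.ge) (hW.trans hcard.symm)
    (mul_ne_zero hw0 hJ0) ?_ ?_⟩
  · rintro (i | i)
    · exact hEs i
    · fin_cases i <;> simpa
  · rintro (i | i)
    · simp [hroot i]
    · fin_cases i <;> simp

theorem integral_derivative_mul_eq_zero_of_eval_gaussLobatto_eq_zero (hm : 2 ≤ m)
    (hJdeg : J.natDegree = m - 2) (hJ0 : J ≠ 0)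
    (hJorth : ∀ r : ℝ[X], r.natDegree < m - 2 →
      ∫ t in (-1 : ℝ)..1, (1 - t) * (1 + t) * J.eval t * r.eval t = 0)
    (hs : Function.Injective s) (hsmem : ∀ i, s i ∈ Set.Ioo (-1 : ℝ) 1)
    (hroot : ∀ i, J.eval (s i) = 0) (hE : E.natDegree ≤ m) (hEm1 : E.eval (-1) = 0)
    (hE1 : E.eval 1 = 0) (hEs : ∀ i, E.eval (s i) = 0) (r : ℝ[X]) (hr : r.natDegree < m - 1) :
    ∫ t in (-1 : ℝ)..1, (derivative E).eval t * r.eval t = 0 := by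
  rw [integral_derivative_mul_eq_neg_integral_mul_derivative hEm1 hE1, neg_eq_zero]
  rcases eq_or_ne (derivative r) 0 with hr' | hr'
  · simp [hr']
  have hr'deg : (derivative r).natDegree < m - 2 := by
    have := natDegree_derivative_lt fun h => hr' (derivative_of_natDegree_zero h)
    omega
  obtain ⟨c, rfl⟩ := exists_eq_C_mul_one_sub_X_mul_one_add_X_mul hm hJdeg hJ0 hs hsmem hroot hE
    hEm1 hE1 hEs
  simp only [eval_mul, eval_C, eval_sub, eval_add, eval_one, eval_X, mul_assoc c,
    integral_const_mul, hJorth _ hr'deg, mul_zero]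

end GaussLobatto

end Real

end Polynomial

theorem deriv_gaussLobatto_interpolant_eq_at_gauss_points_general
    (k : ℕ) (hk : 2 ≤ k) (a b : ℝ) (hab : a < b)
    (T : ℝ → ℝ) (hT : ∀ x, T x = (a + b) / 2 + (b - a) / 2 * x)
    -- Jacobi polynomial of degree k-2 for the weight (1-t)(1+t) and its roots
    (J : Polynomial ℝ) (hJdeg : J.natDegree = k - 2) (hJne : J ≠ 0)
    (hJorth : ∀ r : Polynomial ℝ, r.natDegree < k - 2 →
      ∫ t in (-1:ℝ)..1, (1 - t) * (1 + t) * J.eval t * r.eval t = 0)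
    (s : Fin (k - 2) → ℝ) (hs : Function.Injective s)
    (hsmem : ∀ i, s i ∈ Set.Ioo (-1:ℝ) 1) (hroot : ∀ i, J.eval (s i) = 0)
    -- Legendre polynomial of degree k-1 and its roots (the Gauss points)
    (L : Polynomial ℝ) (hLdeg : L.natDegree = k - 1) (hLne : L ≠ 0)
    (hLorth : ∀ r : Polynomial ℝ, r.natDegree < k - 1 →
      ∫ t in (-1:ℝ)..1, L.eval t * r.eval t = 0)
    (g : Fin (k - 1) → ℝ)
    (hgroot : ∀ i, L.eval (g i) = 0)
    -- p and its Gauss--Lobatto interpolant q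
    (p q : Polynomial ℝ) (hp : p.natDegree ≤ k) (hq : q.natDegree ≤ k - 1)
    (hend1 : q.eval a = p.eval a) (hend2 : q.eval b = p.eval b)
    (hint : ∀ i, q.eval (T (s i)) = p.eval (T (s i))) :
    ∀ i, (derivative q).eval (T (g i)) = (derivative p).eval (T (g i)) := by
  intro i
  set τ : ℝ[X] := C ((b - a) / 2) * X + C ((a + b) / 2)
  have hτ (x : ℝ) : τ.eval x = T x := by simp [τ, hT, add_comm]
  set E := (p - q).comp τ
  have hE (x : ℝ) : E.eval x = p.eval (T x) - q.eval (T x) := by simp [E, hτ]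
  have hEdeg : E.natDegree ≤ k := by
    calc E.natDegree ≤ (p - q).natDegree * τ.natDegree := natDegree_comp_le
      _ ≤ k * 1 :=
        Nat.mul_le_mul ((natDegree_sub_le_of_le hp hq).trans (by omega)) natDegree_linear_le
      _ = k := mul_one k
  have hTa : T (-1) = a := by rw [hT]; ring
  have hTb : T 1 = b := by rw [hT]; ring
  have hEorth := integral_derivative_mul_eq_zero_of_eval_gaussLobatto_eq_zero hk hJdeg hJne hJorth
    hs hsmem hroot hEdeg (by rw [hE, hTa, hend1, sub_self]) (by rw [hE, hTb, hend2, sub_self])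
    (fun j => by rw [hE, hint j, sub_self])
  have hEL := eq_C_mul_of_forall_integral_eval_mul_eq_zero (by norm_num)
    ((natDegree_derivative_le E).trans (by omega)) hLdeg hLne hEorth hLorth
  have hE'g : (derivative E).eval (g i) =
      (b - a) / 2 * ((derivative p).eval (T (g i)) - (derivative q).eval (T (g i))) := by
    have hτ' : derivative τ = C ((b - a) / 2) := by simp [τ]
    simp only [E, derivative_comp, hτ', eval_mul, eval_C, eval_comp, hτ, derivative_sub, eval_sub]
  have hE'g0 : (derivative E).eval (g i) = 0 := by rw [hEL]; simp [hgroot i]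
  rw [hE'g, mul_eq_zero, sub_eq_zero] at hE'g0
  exact (hE'g0.resolve_left (div_pos (sub_pos.mpr hab) two_pos).ne').symm

/-- Derivatives of a polynomial `p` of degree ≤ k and of its Gauss--Lobatto
interpolant `q` (degree ≤ k-1, interpolating `p` at the k Gauss--Lobatto points
of `[a,b]`) agree at every Gauss point of `[a,b]`. The interior Gauss--Lobatto
points are the affine images of the roots of the Jacobi polynomial of degree `k-2`
for the weight `(1-t)(1+t)`; the Gauss points are the affine images of the roots
of the Legendre polynomial of degree `k-1`. -/
theorem deriv_gaussLobatto_interpolant_eq_at_gauss_points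
    (k : ℕ) (hk : 2 ≤ k) (a b : ℝ) (hab : a < b)
    (T : ℝ → ℝ) (hT : ∀ x, T x = (a + b) / 2 + (b - a) / 2 * x)
    -- Jacobi polynomial of degree k-2 for the weight (1-t)(1+t) and its roots
    (J : Polynomial ℝ) (hJdeg : J.natDegree = k - 2) (hJne : J ≠ 0)
    (hJorth : ∀ r : Polynomial ℝ, r.natDegree < k - 2 →
      ∫ t in (-1:ℝ)..1, (1 - t) * (1 + t) * J.eval t * r.eval t = 0)
    (s : Fin (k - 2) → ℝ) (hs : Function.Injective s)
    (hsmem : ∀ i, s i ∈ Set.Ioo (-1:ℝ) 1) (hroot : ∀ i, J.eval (s i) = 0)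
    -- Legendre polynomial of degree k-1 and its roots (the Gauss points)
    (L : Polynomial ℝ) (hLdeg : L.natDegree = k - 1) (hLne : L ≠ 0)
    (hLorth : ∀ r : Polynomial ℝ, r.natDegree < k - 1 →
      ∫ t in (-1:ℝ)..1, L.eval t * r.eval t = 0)
    (g : Fin (k - 1) → ℝ) (hg : Function.Injective g)
    (hgmem : ∀ i, g i ∈ Set.Ioo (-1:ℝ) 1) (hgroot : ∀ i, L.eval (g i) = 0)
    -- p and its Gauss--Lobatto interpolant q
    (p q : Polynomial ℝ) (hp : p.natDegree ≤ k) (hq : q.natDegree ≤ k - 1)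
    (hend1 : q.eval a = p.eval a) (hend2 : q.eval b = p.eval b)
    (hint : ∀ i, q.eval (T (s i)) = p.eval (T (s i))) :
    ∀ i, (derivative q).eval (T (g i)) = (derivative p).eval (T (g i)) :=
  deriv_gaussLobatto_interpolant_eq_at_gauss_points_general k hk a b hab T hT J hJdeg hJne hJorth s
    hs hsmem hroot L hLdeg hLne hLorth g hgroot p q hp hq hend1 hend2 hint
end

section
/- For every polynomial u : I_n → H of degree at most k with values in a Hilbert space H, one has ∫_{I_n} ‖u(t)‖² dt ≤ C (τ_n ‖u(t_{n-1})‖² + τ_n² ∫_{I_n} ‖u'(t)‖² dt), where τ_n = t_n − t_{n-1} and C depends only on k. -/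
/-!
The bound holds with `C = 2` for every `C¹` curve in a normed space, polynomial or not. For
`t ∈ [a, b]` one has `‖u t‖ ≤ ‖u a‖ + ∫_a^t ‖u'‖`, and by Cauchy–Schwarz
`(∫_a^t ‖u'‖)² ≤ (b - a) ∫_a^b ‖u'‖²`; hence `‖u t‖² ≤ 2 ‖u a‖² + 2 (b - a) ∫_a^b ‖u'‖²`,
which integrates over `[a, b]` to the claim.
-/

open MeasureTheory intervalIntegral Set

theorem sq_intervalIntegral_le_mul_intervalIntegral_sq {f : ℝ → ℝ} {a b : ℝ} (hab : a ≤ b)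
    (hf : IntervalIntegrable f volume a b)
    (hf2 : IntervalIntegrable (fun x => f x ^ 2) volume a b) :
    (∫ x in a..b, f x) ^ 2 ≤ (b - a) * ∫ x in a..b, f x ^ 2 := by
  rcases hab.eq_or_lt with rfl | hlt
  · simp
  have jensen : (⨍ x in a..b, f x) ^ 2 ≤ ⨍ x in a..b, f x ^ 2 :=
    (even_two.convexOn_pow (𝕜 := ℝ)).map_set_average_le (continuous_pow 2).continuousOn
      isClosed_univ (by simp [sub_eq_zero, hlt.ne']) (by simp) (by simp) hf.def'
      (by simpa [Function.comp_def] using hf2.def')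
  have hpos : 0 < b - a := sub_pos.2 hlt
  rw [interval_average_eq_div, interval_average_eq_div, div_pow, div_le_div_iff₀ (by positivity)
    hpos] at jensen
  nlinarith

section Curve

variable {E : Type*} [NormedAddCommGroup E] [NormedSpace ℝ E] {u : ℝ → E} {a b : ℝ}

theorem norm_sq_le_of_contDiff (hu : ContDiff ℝ 1 u) {t : ℝ} (ht : t ∈ Icc a b) :
    ‖u t‖ ^ 2 ≤ 2 * (‖u a‖ ^ 2 + (b - a) * ∫ s in a..b, ‖deriv u s‖ ^ 2) := by
  obtain ⟨hat, htb⟩ := ht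
  have hu' : Continuous fun s => ‖deriv u s‖ := (hu.continuous_deriv le_rfl).norm
  set X := ∫ s in a..t, ‖deriv u s‖
  have displacement : ‖u t‖ ≤ ‖u a‖ + X :=
    calc ‖u t‖ ≤ ‖u a‖ + ‖u t - u a‖ := norm_le_insert' _ _
      _ ≤ ‖u a‖ + X := by
        gcongr
        exact norm_sub_le_integral_of_norm_deriv_le_of_le hat hu.continuous.continuousOn
          (hu.differentiable one_ne_zero).differentiableOn (.of_forall fun _ _ => le_rfl)
          (hu'.intervalIntegrable a t)
  have cauchy_schwarz : X ^ 2 ≤ (b - a) * ∫ s in a..b, ‖deriv u s‖ ^ 2 :=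
    calc X ^ 2 ≤ (t - a) * ∫ s in a..t, ‖deriv u s‖ ^ 2 :=
          sq_intervalIntegral_le_mul_intervalIntegral_sq hat (hu'.intervalIntegrable a t)
            ((hu'.pow 2).intervalIntegrable a t)
      _ ≤ (b - a) * ∫ s in a..b, ‖deriv u s‖ ^ 2 :=
        mul_le_mul (by linarith)
          (integral_mono_interval le_rfl hat htb (.of_forall fun _ => sq_nonneg _)
            ((hu'.pow 2).intervalIntegrable a b))
          (integral_nonneg hat fun _ _ => sq_nonneg _) (by linarith)
  have hX : 0 ≤ X := integral_nonneg hat fun _ _ => norm_nonneg _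
  nlinarith [add_sq_le (a := ‖u a‖) (b := X), norm_nonneg (u t)]

theorem integral_norm_sq_le_of_contDiff (hu : ContDiff ℝ 1 u) (hab : a ≤ b) :
    ∫ t in a..b, ‖u t‖ ^ 2 ≤
      2 * ((b - a) * ‖u a‖ ^ 2 + (b - a) ^ 2 * ∫ t in a..b, ‖deriv u t‖ ^ 2) :=
  calc ∫ t in a..b, ‖u t‖ ^ 2
      ≤ ∫ _ in a..b, 2 * (‖u a‖ ^ 2 + (b - a) * ∫ s in a..b, ‖deriv u s‖ ^ 2) :=
        integral_mono_on hab ((hu.continuous.norm.pow 2).intervalIntegrable a b)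
          intervalIntegrable_const fun _ ht => norm_sq_le_of_contDiff hu ht
    _ = 2 * ((b - a) * ‖u a‖ ^ 2 + (b - a) ^ 2 * ∫ t in a..b, ‖deriv u t‖ ^ 2) := by
        rw [intervalIntegral.integral_const, smul_eq_mul]
        ring

end Curve

/-- For every `H`-valued polynomial `u` of degree at most `k` on `I_n = [a,b]`,
`∫_{I_n} ‖u‖² ≤ C (τ_n ‖u(a)‖² + τ_n² ∫_{I_n} ‖u'‖²)` with `C` depending only on `k`. -/
theorem polynomial_L2_bound_by_initial_value_and_derivative (k : ℕ) :
    ∃ C : ℝ, 0 < C ∧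
      ∀ (H : Type) [NormedAddCommGroup H] [InnerProductSpace ℝ H],
        ∀ (a b : ℝ), a < b →
          ∀ (c : Fin (k + 1) → H) (u : ℝ → H),
            (∀ t, u t = ∑ i : Fin (k + 1), t ^ (i : ℕ) • c i) →
            (∫ t in a..b, ‖u t‖ ^ 2) ≤
              C * ((b - a) * ‖u a‖ ^ 2 + (b - a) ^ 2 * ∫ t in a..b, ‖deriv u t‖ ^ 2) := by
  refine ⟨2, two_pos, fun H _ _ a b hab c u hu => ?_⟩
  obtain rfl : u = fun t => ∑ i : Fin (k + 1), t ^ (i : ℕ) • c i := funext hu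
  exact integral_norm_sq_le_of_contDiff (by fun_prop) hab.le
end

section
/- Let B be a Banach space and u ∈ C¹(I_n; B). Let R u ∈ P_k(I_n; B) satisfy R u(t_{n-1}) = I u(t_{n-1}) and (R u)' = I^GL_{k}((I u)') where I u ∈ P_{k+1}(I_n; B) is the Hermite interpolant of u and I^GL_k denotes Lagrange interpolation at the k Gauss–Lobatto points into P_{k-1}(I_n; B). Then R u(t_n) = u(t_n) and (R u)'(t_{n-1}) = u'(t_{n-1}), (R u)'(t_n) = u'(t_n), provided I u matches u and u' at both endpoints. -/
/-!
Put `F := Iu - Ru`, a `B`-valued polynomial with `F a = 0`; it suffices to show `φ (F b) = 0` for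
every continuous functional `φ`. The real polynomial `(φ ∘ F)'` has degree at most `k` and vanishes
at the `k` Gauss–Lobatto nodes `a`, `b`, `T (s i)`, so it is a multiple of the node polynomial
`(t - a) (t - b) J (T⁻¹ t)`. Substituting `t = T x`, the integral of the node polynomial over
`[a, b]` is a multiple of `∫₋₁¹ (1 - x) (1 + x) J x dx`, which vanishes because `J` is orthogonal to
constants (here `k ≥ 3` is used). Hence `φ (F b) - φ (F a) = ∫ₐᵇ (φ ∘ F)' = 0`.
-/

open Polynomial

namespace Polynomial

theorem exists_eq_C_mul_of_eval_eq_zero {K : Type*} [Field K] {p q : K[X]} {S : Finset K}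
    (hq0 : q ≠ 0) (hq : q.natDegree = S.card) (hp : p.natDegree ≤ S.card)
    (hpS : ∀ x ∈ S, p.eval x = 0) (hqS : ∀ x ∈ S, q.eval x = 0) :
    ∃ c, p = C c * q := by
  refine ⟨p.coeff S.card / q.leadingCoeff, eq_of_degree_sub_lt_of_eval_finset_eq S ?_ ?_⟩
  · rw [degree_lt_iff_coeff_zero]
    intro m hm
    rcases hm.lt_or_eq with hm | rfl
    · rw [coeff_sub, coeff_C_mul, coeff_eq_zero_of_natDegree_lt (hp.trans_lt hm),
        coeff_eq_zero_of_natDegree_lt (hq.trans_lt hm), mul_zero, sub_zero]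
    · rw [coeff_sub, coeff_C_mul, ← hq, coeff_natDegree,
        div_mul_cancel₀ _ (leadingCoeff_ne_zero.2 hq0), sub_self]
  · intro x hx
    rw [eval_mul, eval_C, hpS x hx, hqS x hx, mul_zero]

theorem integral_derivative_eval (p : ℝ[X]) (a b : ℝ) :
    ∫ t in a..b, p.derivative.eval t = p.eval b - p.eval a :=
  intervalIntegral.integral_eq_sub_of_hasDerivAt (fun t _ => p.hasDerivAt t)
    (p.derivative.continuous.intervalIntegrable a b)

end Polynomial

noncomputable def lobattoNodePoly (a b : ℝ) (J : ℝ[X]) : ℝ[X] :=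
  (X - C a) * (X - C b) * J.comp (C (2 / (b - a)) * (X - C ((a + b) / 2)))

section lobattoNodePoly

variable {a b : ℝ} {J : ℝ[X]}

theorem eval_lobattoNodePoly_affine (hab : a ≠ b) (x : ℝ) :
    (lobattoNodePoly a b J).eval ((a + b) / 2 + (b - a) / 2 * x) =
      -((b - a) / 2) ^ 2 * ((1 - x) * (1 + x) * J.eval x) := by
  have hba : b - a ≠ 0 := sub_ne_zero.2 hab.symm
  simp only [lobattoNodePoly, eval_mul, eval_sub, eval_X, eval_C, eval_comp]
  rw [show 2 / (b - a) * ((a + b) / 2 + (b - a) / 2 * x - (a + b) / 2) = x by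
    field_simp; ring]
  ring

theorem eval_lobattoNodePoly_affine_eq_zero_of_isRoot (hab : a ≠ b) {x : ℝ} (hx : J.IsRoot x) :
    (lobattoNodePoly a b J).eval ((a + b) / 2 + (b - a) / 2 * x) = 0 := by
  rw [eval_lobattoNodePoly_affine hab, hx.eq_zero, mul_zero, mul_zero]

theorem eval_lobattoNodePoly_left : (lobattoNodePoly a b J).eval a = 0 := by
  simp [lobattoNodePoly]

theorem eval_lobattoNodePoly_right : (lobattoNodePoly a b J).eval b = 0 := by
  simp [lobattoNodePoly]

theorem natDegree_lobattoNodePoly (hab : a ≠ b) (hJ : J ≠ 0) :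
    (lobattoNodePoly a b J).natDegree = J.natDegree + 2 := by
  have hlin : (C (2 / (b - a)) * (X - C ((a + b) / 2))).natDegree = 1 := by
    rw [natDegree_C_mul (div_ne_zero two_ne_zero (sub_ne_zero.2 hab.symm)), natDegree_X_sub_C]
  have hcomp : J.comp (C (2 / (b - a)) * (X - C ((a + b) / 2))) ≠ 0 := by
    rw [← leadingCoeff_ne_zero, leadingCoeff_comp (by rw [hlin]; exact one_ne_zero)]
    exact mul_ne_zero (leadingCoeff_ne_zero.2 hJ)
      (pow_ne_zero _ (leadingCoeff_ne_zero.2 (ne_zero_of_natDegree_gt (hlin ▸ zero_lt_one))))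
  rw [lobattoNodePoly, natDegree_mul (mul_ne_zero (X_sub_C_ne_zero a) (X_sub_C_ne_zero b)) hcomp,
    natDegree_mul (X_sub_C_ne_zero a) (X_sub_C_ne_zero b), natDegree_comp, hlin,
    natDegree_X_sub_C, natDegree_X_sub_C]
  ring

theorem integral_lobattoNodePoly_eq_zero (hab : a ≠ b)
    (hJ : ∫ x in (-1 : ℝ)..1, (1 - x) * (1 + x) * J.eval x = 0) :
    ∫ t in a..b, (lobattoNodePoly a b J).eval t = 0 := by
  have hsub := intervalIntegral.smul_integral_comp_mul_add (a := -1) (b := 1)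
    (fun t => (lobattoNodePoly a b J).eval t) ((b - a) / 2) ((a + b) / 2)
  rw [show (b - a) / 2 * -1 + (a + b) / 2 = a by ring,
    show (b - a) / 2 * 1 + (a + b) / 2 = b by ring] at hsub
  simp only [add_comm _ ((a + b) / 2), eval_lobattoNodePoly_affine hab,
    intervalIntegral.integral_const_mul, hJ, mul_zero, smul_zero] at hsub
  exact hsub.symm

end lobattoNodePoly

theorem integral_eq_zero_of_eval_lobatto_nodes_eq_zero {a b : ℝ} (hab : a < b) {J : ℝ[X]}
    (hJ : J ≠ 0) {k : ℕ} (hJdeg : J.natDegree = k)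
    (hJorth : ∫ x in (-1 : ℝ)..1, (1 - x) * (1 + x) * J.eval x = 0)
    {s : Fin k → ℝ} (hs : Function.Injective s) (hsmem : ∀ i, s i ∈ Set.Ioo (-1 : ℝ) 1)
    (hroot : ∀ i, J.eval (s i) = 0) {D : ℝ[X]} (hD : D.natDegree ≤ k + 2)
    (hDa : D.eval a = 0) (hDb : D.eval b = 0)
    (hDs : ∀ i, D.eval ((a + b) / 2 + (b - a) / 2 * s i) = 0) :
    ∫ t in a..b, D.eval t = 0 := by
  set node : Fin k → ℝ := fun i => (a + b) / 2 + (b - a) / 2 * s i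
  have hnode_mem (i) : node i ∈ Set.Ioo a b := by
    obtain ⟨h₁, h₂⟩ := hsmem i
    constructor <;> simp only [node] <;> nlinarith
  have hnode_inj : Function.Injective node := fun i j hij =>
    hs (mul_left_cancel₀ (by linarith) (add_left_cancel hij))
  set S := insert a (insert b (Finset.univ.image node))
  have hS : S.card = k + 2 := by
    rw [Finset.card_insert_of_notMem, Finset.card_insert_of_notMem,
      Finset.card_image_of_injective _ hnode_inj, Finset.card_univ, Fintype.card_fin]
    · simpa using fun i => (hnode_mem i).2.ne
    · simpa [hab.ne] using fun i => (hnode_mem i).1.ne'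
  have hDS : ∀ x ∈ S, D.eval x = 0 := by
    simp only [S, Finset.mem_insert, Finset.mem_image]
    rintro x (rfl | rfl | ⟨i, -, rfl⟩)
    exacts [hDa, hDb, hDs i]
  have hqS : ∀ x ∈ S, (lobattoNodePoly a b J).eval x = 0 := by
    simp only [S, Finset.mem_insert, Finset.mem_image]
    rintro x (rfl | rfl | ⟨i, -, rfl⟩)
    exacts [eval_lobattoNodePoly_left, eval_lobattoNodePoly_right,
      eval_lobattoNodePoly_affine_eq_zero_of_isRoot hab.ne (hroot i)]
  have hq := hJdeg ▸ natDegree_lobattoNodePoly hab.ne hJ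
  obtain ⟨c, rfl⟩ := exists_eq_C_mul_of_eval_eq_zero
    (ne_zero_of_natDegree_gt (n := 0) (by omega)) (hq.trans hS.symm) (hS ▸ hD) hDS hqS
  simp only [eval_mul, eval_C, intervalIntegral.integral_const_mul,
    integral_lobattoNodePoly_eq_zero hab.ne hJorth, mul_zero]

section dualPoly

variable {B : Type*} [NormedAddCommGroup B] [NormedSpace ℝ B] (φ : StrongDual ℝ B) {n : ℕ}

noncomputable def dualPoly (c : Fin n → B) : ℝ[X] :=
  ∑ i, C (φ (c i)) * X ^ (i : ℕ)

theorem eval_dualPoly {f : ℝ → B} {c : Fin n → B}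
    (hf : ∀ t, f t = ∑ i : Fin n, t ^ (i : ℕ) • c i) (t : ℝ) :
    (dualPoly φ c).eval t = φ (f t) := by
  simp only [hf, dualPoly, eval_finsetSum, eval_mul, eval_C, eval_pow, eval_X, map_sum, map_smul,
    smul_eq_mul, mul_comm]

theorem natDegree_dualPoly_le (c : Fin (n + 1) → B) : (dualPoly φ c).natDegree ≤ n :=
  natDegree_sum_le_of_forall_le _ _ fun i _ =>
    (natDegree_C_mul_X_pow_le _ _).trans (Nat.lt_succ_iff.1 i.isLt)

theorem eval_derivative_dualPoly {f : ℝ → B} {c : Fin n → B}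
    (hf : ∀ t, f t = ∑ i : Fin n, t ^ (i : ℕ) • c i) (t : ℝ) :
    (dualPoly φ c).derivative.eval t = φ (deriv f t) := by
  have hdiff : Differentiable ℝ f := by
    rw [funext hf]
    exact Differentiable.fun_sum fun i _ => (differentiable_pow (i : ℕ)).smul_const (c i)
  refine ((dualPoly φ c).hasDerivAt t).unique ?_
  simp only [eval_dualPoly φ hf]
  exact φ.hasFDerivAt.comp_hasDerivAt t (hdiff t).hasDerivAt

end dualPoly

theorem Rk_interpolant_endpoint_matching_general
    (B : Type*) [NormedAddCommGroup B] [NormedSpace ℝ B]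
    (k : ℕ) (hk : 3 ≤ k) (a b : ℝ) (hab : a < b)
    (T : ℝ → ℝ) (hT : ∀ x, T x = (a + b) / 2 + (b - a) / 2 * x)
    (J : Polynomial ℝ) (hJdeg : J.natDegree = k - 2)
    (hJorth : ∀ r : Polynomial ℝ, r.natDegree < k - 2 →
      ∫ t in (-1:ℝ)..1, (1 - t) * (1 + t) * J.eval t * r.eval t = 0)
    (s : Fin (k - 2) → ℝ) (hs : Function.Injective s)
    (hsmem : ∀ i, s i ∈ Set.Ioo (-1:ℝ) 1) (hroot : ∀ i, J.eval (s i) = 0)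
    (u ud : ℝ → B)
    (Iu : ℝ → B) (cI : Fin (k + 2) → B)
    (hIu : ∀ t, Iu t = ∑ i : Fin (k + 2), t ^ (i : ℕ) • cI i)
    (hIb : Iu b = u b)
    (hIa' : deriv Iu a = ud a) (hIb' : deriv Iu b = ud b)
    (Ru : ℝ → B) (cR : Fin (k + 1) → B)
    (hRu : ∀ t, Ru t = ∑ i : Fin (k + 1), t ^ (i : ℕ) • cR i)
    (hRa : Ru a = Iu a)
    (hGLa : deriv Ru a = deriv Iu a) (hGLb : deriv Ru b = deriv Iu b)
    (hGLint : ∀ i, deriv Ru (T (s i)) = deriv Iu (T (s i))) :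
    Ru b = u b ∧ deriv Ru a = ud a ∧ deriv Ru b = ud b := by
  refine ⟨?_, hGLa.trans hIa', hGLb.trans hIb'⟩
  obtain rfl : T = _ := funext hT
  rw [← hIb, SeparatingDual.eq_iff_forall_dual_eq (R := ℝ)]
  intro φ
  set F := dualPoly φ cI - dualPoly φ cR
  have hnode (t : ℝ) (ht : deriv Ru t = deriv Iu t) : F.derivative.eval t = 0 := by
    rw [derivative_sub, eval_sub, eval_derivative_dualPoly φ hIu, eval_derivative_dualPoly φ hRu,
      ht, sub_self]
  have hFdeg : F.derivative.natDegree ≤ k - 2 + 2 := by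
    have : F.natDegree ≤ max (k + 1) k :=
      natDegree_sub_le_of_le (natDegree_dualPoly_le φ cI) (natDegree_dualPoly_le φ cR)
    have := natDegree_derivative_le F
    omega
  have hint := integral_eq_zero_of_eval_lobatto_nodes_eq_zero hab
    (ne_zero_of_natDegree_gt (n := 0) (by omega)) hJdeg
    (by simpa using hJorth 1 (by rw [natDegree_one]; omega)) hs hsmem hroot hFdeg
    (hnode a hGLa) (hnode b hGLb) fun i => hnode _ (hGLint i)
  rw [integral_derivative_eval] at hint
  simp only [F, eval_sub, eval_dualPoly φ hIu, eval_dualPoly φ hRu, hRa] at hint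
  linarith

/-- Endpoint matching of the interpolant `R u ∈ P_k(I_n;B)` defined by
`R u(t_{n-1}) = I u(t_{n-1})` and `(R u)'(t^GL) = (I u)'(t^GL)` at all `k` Gauss--Lobatto
points (endpoints `a, b` and affine images of the roots of the Jacobi polynomial of
degree `k-2` for the weight `(1-t)(1+t)`), where `I u ∈ P_{k+1}(I_n;B)` matches `u`
and `u'` at both endpoints: then `R u(t_n) = u(t_n)` and `(R u)'` matches `u'` at both
endpoints. -/
theorem Rk_interpolant_endpoint_matching
    (B : Type*) [NormedAddCommGroup B] [NormedSpace ℝ B]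
    (k : ℕ) (hk : 3 ≤ k) (a b : ℝ) (hab : a < b)
    (T : ℝ → ℝ) (hT : ∀ x, T x = (a + b) / 2 + (b - a) / 2 * x)
    (J : Polynomial ℝ) (hJdeg : J.natDegree = k - 2) (hJne : J ≠ 0)
    (hJorth : ∀ r : Polynomial ℝ, r.natDegree < k - 2 →
      ∫ t in (-1:ℝ)..1, (1 - t) * (1 + t) * J.eval t * r.eval t = 0)
    (s : Fin (k - 2) → ℝ) (hs : Function.Injective s)
    (hsmem : ∀ i, s i ∈ Set.Ioo (-1:ℝ) 1) (hroot : ∀ i, J.eval (s i) = 0)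
    (u ud : ℝ → B)
    (Iu : ℝ → B) (cI : Fin (k + 2) → B)
    (hIu : ∀ t, Iu t = ∑ i : Fin (k + 2), t ^ (i : ℕ) • cI i)
    (hIa : Iu a = u a) (hIb : Iu b = u b)
    (hIa' : deriv Iu a = ud a) (hIb' : deriv Iu b = ud b)
    (Ru : ℝ → B) (cR : Fin (k + 1) → B)
    (hRu : ∀ t, Ru t = ∑ i : Fin (k + 1), t ^ (i : ℕ) • cR i)
    (hRa : Ru a = Iu a)
    (hGLa : deriv Ru a = deriv Iu a) (hGLb : deriv Ru b = deriv Iu b)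
    (hGLint : ∀ i, deriv Ru (T (s i)) = deriv Iu (T (s i))) :
    Ru b = u b ∧ deriv Ru a = ud a ∧ deriv Ru b = ud b :=
  Rk_interpolant_endpoint_matching_general B k hk a b hab T hT J hJdeg hJorth s hs hsmem hroot u ud
    Iu cI hIu hIb hIa' hIb' Ru cR hRu hRa hGLa hGLb hGLint
end
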